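/- arXiv:2205.05643 — 3 statements merged into one kernel-verified Lean document; each statement's English description precedes it below -/
import Mathlib

section
/- Let s be a primitive string of length n over Σ with a context adaptive ordering, let x be a string with |x| < n, let u be a rotation of s with prefix x, and let c ∈ Σ. Then the (|x|+1)-st symbol of u equals c if and only if Σ_{d <_{π_x} c} occ_s(x·d) ≤ #{v : v is a rotation of s with prefix x and v ≺ u} < Σ_{d <_{π_x} c} occ_s(x·d) + occ_s(x·c). -/
open scoped Classical

variable {A : Type*}

/-- Longest common prefix of two lists. -/
def lcp [DecidableEq A] : List A → List A → List A
  | a :: as, b :: bs => if a = b then a :: lcp as bs else []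
  | _, _ => []

/-- A string is primitive if its cyclic rotations are pairwise distinct. -/
def Primitive (s : List A) : Prop :=
  ∀ i j, i < s.length → j < s.length → s.rotate i = s.rotate j → i = j

/-- The context-adaptive comparison relation on rotations. -/
def Prec [DecidableEq A] (π : List A → A → A → Prop) (u v : List A) : Prop :=
  ∃ a b, u[(lcp u v).length]? = some a ∧ v[(lcp u v).length]? = some b ∧
    π (lcp u v) a b

/-- `occ s w` is the number of cyclic rotations of `s` having `w` as a prefix. -/
noncomputable def occ [DecidableEq A] (s w : List A) : ℕ :=
  ((Finset.range s.length).filter (fun i => w <+: s.rotate i)).card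

lemma lcp_self [DecidableEq A] (l : List A) : lcp l l = l := by
  induction l with
  | nil => rfl
  | cons a t ih => simp [lcp, ih]

lemma lcp_append_cons_ne [DecidableEq A] (x : List A) {a b : A} (h : a ≠ b)
    (ta tb : List A) : lcp (x ++ a :: ta) (x ++ b :: tb) = x := by
  induction x with
  | nil => simp [lcp, h]
  | cons y ys ih => simp [lcp, ih]

lemma getElem?_append_cons (x : List A) (a : A) (t : List A) :
    (x ++ a :: t)[x.length]? = some a := by
  rw [List.getElem?_append_right (le_refl _)]
  simp

lemma exists_cons_of_prefix {x l : List A} (h : x <+: l) (hlt : x.length < l.length) :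
    ∃ a t, l = x ++ a :: t := by
  obtain ⟨t, rfl⟩ := h
  cases t with
  | nil => simp at hlt
  | cons a ta => exact ⟨a, ta, rfl⟩

lemma snoc_prefix_iff {x l : List A} {d : A} :
    (x ++ [d]) <+: l ↔ x <+: l ∧ l[x.length]? = some d := by
  constructor
  · rintro ⟨t, rfl⟩
    refine ⟨⟨d :: t, by simp⟩, ?_⟩
    rw [List.append_assoc]
    simpa using getElem?_append_cons x d t
  · rintro ⟨⟨t, rfl⟩, h2⟩
    rw [List.getElem?_append_right (le_refl _)] at h2
    simp only [Nat.sub_self] at h2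
    cases t with
    | nil => simp at h2
    | cons e t' =>
      simp only [List.getElem?_cons_zero, Option.some.injEq] at h2
      subst h2
      exact ⟨t', by simp⟩

lemma not_prec_self [DecidableEq A] (π : List A → A → A → Prop) (u : List A) :
    ¬ Prec π u u := by
  rintro ⟨a, b, ha, _, _⟩
  rw [lcp_self] at ha
  simp [List.getElem?_eq_none (le_refl u.length)] at ha

lemma prec_iff_of_ne [DecidableEq A] (π : List A → A → A → Prop) (x : List A)
    {a b : A} (h : b ≠ a) (ta tb : List A) :
    Prec π (x ++ b :: tb) (x ++ a :: ta) ↔ π x b a := by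
  unfold Prec
  rw [lcp_append_cons_ne x h, getElem?_append_cons, getElem?_append_cons]
  constructor
  · rintro ⟨a', b', ha', hb', hp⟩
    obtain rfl : b = a' := by simpa using ha'
    obtain rfl : a = b' := by simpa using hb'
    exact hp
  · intro hp; exact ⟨b, a, rfl, rfl, hp⟩

/-- for a rotation `u` of `s` with prefix `x` (`|x| < n`) and a
symbol `c`, the `(|x|+1)`-st symbol of `u` equals `c` iff
`∑_{d <_{π x} c} occ s (x·d) ≤ #{v : v rotation with prefix x, v ≺ u} <
∑_{d <_{π x} c} occ s (x·d) + occ s (x·c)`. -/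
theorem stmt3 [Fintype A] [DecidableEq A]
    (π : List A → A → A → Prop) (hπ : ∀ x, IsStrictTotalOrder A (π x))
    (s : List A) (hs : 1 ≤ s.length) (hprim : Primitive s)
    (x : List A) (hx : x.length < s.length)
    (i : ℕ) (hi : i < s.length) (hpre : x <+: s.rotate i) (c : A) :
    (s.rotate i)[x.length]? = some c ↔
      ((∑ d ∈ Finset.univ.filter (fun d => π x d c), occ s (x ++ [d])) ≤
        ((Finset.range s.length).filter (fun j => x <+: s.rotate j ∧
          Prec π (s.rotate j) (s.rotate i))).card ∧
      ((Finset.range s.length).filter (fun j => x <+: s.rotate j ∧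
          Prec π (s.rotate j) (s.rotate i))).card <
        (∑ d ∈ Finset.univ.filter (fun d => π x d c), occ s (x ++ [d])) +
          occ s (x ++ [c])) := by
  haveI := hπ x
  obtain ⟨a, ta, hu⟩ := exists_cons_of_prefix hpre (by rwa [List.length_rotate])
  rw [hu, getElem?_append_cons]
  -- split predicate
  have hrotlen : ∀ j : ℕ, x.length < (s.rotate j).length := by
    intro j; rwa [List.length_rotate]
  have hsplit : ∀ j : ℕ,
      (x <+: s.rotate j ∧ Prec π (s.rotate j) (x ++ a :: ta)) ↔
      ((∃ d, π x d a ∧ (x ++ [d]) <+: s.rotate j) ∨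
        ((x ++ [a]) <+: s.rotate j ∧ Prec π (s.rotate j) (x ++ a :: ta))) := by
    intro j
    constructor
    · rintro ⟨hxj, hprec⟩
      obtain ⟨d, tj, hdj⟩ := exists_cons_of_prefix hxj (hrotlen j)
      by_cases hda : d = a
      · subst hda
        exact Or.inr ⟨by rw [hdj]; exact ⟨tj, by simp⟩, hprec⟩
      · refine Or.inl ⟨d, ?_, by rw [hdj]; exact ⟨tj, by simp⟩⟩
        rw [hdj] at hprec
        exact (prec_iff_of_ne π x hda ta tj).mp hprec
    · rintro (⟨d, hda, hdp⟩ | ⟨hap, hprec⟩)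
      · have hdne : d ≠ a := by rintro rfl; exact irrefl_of (π x) d hda
        have hxp := (x.prefix_append [d]).trans hdp
        obtain ⟨t, ht⟩ := hdp
        have hdj : s.rotate j = x ++ d :: t := by rw [← ht]; simp
        refine ⟨hxp, ?_⟩
        rw [hdj]
        exact (prec_iff_of_ne π x hdne ta t).mpr hda
      · exact ⟨(x.prefix_append [a]).trans hap, hprec⟩
  -- decompose the count
  have hcongr : (Finset.range s.length).filter (fun j => x <+: s.rotate j ∧
        Prec π (s.rotate j) (x ++ a :: ta)) =
      ((Finset.range s.length).filter (fun j =>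
          ∃ d, π x d a ∧ (x ++ [d]) <+: s.rotate j)) ∪
      ((Finset.range s.length).filter (fun j =>
          (x ++ [a]) <+: s.rotate j ∧ Prec π (s.rotate j) (x ++ a :: ta))) := by
    rw [← Finset.filter_or]
    exact Finset.filter_congr (fun j _ => by rw [hsplit j])
  have hdisj : Disjoint
      ((Finset.range s.length).filter (fun j =>
          ∃ d, π x d a ∧ (x ++ [d]) <+: s.rotate j))
      ((Finset.range s.length).filter (fun j =>
          (x ++ [a]) <+: s.rotate j ∧ Prec π (s.rotate j) (x ++ a :: ta))) := by
    rw [Finset.disjoint_left]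
    intro j hj1 hj2
    simp only [Finset.mem_filter] at hj1 hj2
    obtain ⟨-, d, hda, hdp⟩ := hj1
    obtain ⟨-, hap, -⟩ := hj2
    have h1 := (snoc_prefix_iff.mp hdp).2
    have h2 := (snoc_prefix_iff.mp hap).2
    rw [h2] at h1
    obtain rfl : a = d := by simpa using h1
    exact irrefl_of (π x) a hda
  have hbi : ((Finset.range s.length).filter (fun j =>
        ∃ d, π x d a ∧ (x ++ [d]) <+: s.rotate j)) =
      (Finset.univ.filter (fun d => π x d a)).biUnion (fun d =>
        (Finset.range s.length).filter (fun j => (x ++ [d]) <+: s.rotate j)) := by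
    ext j
    simp only [Finset.mem_filter, Finset.mem_biUnion, Finset.mem_univ, true_and]
    tauto
  have hpair : ∀ d1 ∈ Finset.univ.filter (fun d => π x d a),
      ∀ d2 ∈ Finset.univ.filter (fun d => π x d a), d1 ≠ d2 →
      Disjoint ((Finset.range s.length).filter (fun j => (x ++ [d1]) <+: s.rotate j))
        ((Finset.range s.length).filter (fun j => (x ++ [d2]) <+: s.rotate j)) := by
    intro d1 _ d2 _ hne
    rw [Finset.disjoint_left]
    intro j hj1 hj2
    simp only [Finset.mem_filter] at hj1 hj2
    have h1 := (snoc_prefix_iff.mp hj1.2).2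
    have h2 := (snoc_prefix_iff.mp hj2.2).2
    rw [h1] at h2
    exact hne (by simpa using h2)
  have hNeq : ((Finset.range s.length).filter (fun j => x <+: s.rotate j ∧
        Prec π (s.rotate j) (x ++ a :: ta))).card =
      (∑ d ∈ Finset.univ.filter (fun d => π x d a), occ s (x ++ [d])) +
      ((Finset.range s.length).filter (fun j =>
          (x ++ [a]) <+: s.rotate j ∧ Prec π (s.rotate j) (x ++ a :: ta))).card := by
    rw [hcongr, Finset.card_union_of_disjoint hdisj, hbi, Finset.card_biUnion hpair]
    rfl
  have hMlt : ((Finset.range s.length).filter (fun j =>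
        (x ++ [a]) <+: s.rotate j ∧ Prec π (s.rotate j) (x ++ a :: ta))).card <
      occ s (x ++ [a]) := by
    apply Finset.card_lt_card
    have hsubs : (Finset.range s.length).filter (fun j =>
          (x ++ [a]) <+: s.rotate j ∧ Prec π (s.rotate j) (x ++ a :: ta)) ⊆
        (Finset.range s.length).filter (fun j => (x ++ [a]) <+: s.rotate j) := by
      intro j hj
      simp only [Finset.mem_filter] at hj ⊢
      exact ⟨hj.1, hj.2.1⟩
    rw [Finset.ssubset_iff_of_subset hsubs]
    refine ⟨i, ?_, ?_⟩
    · simp only [Finset.mem_filter, Finset.mem_range]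
      exact ⟨hi, by rw [hu]; exact ⟨ta, by simp⟩⟩
    · simp only [Finset.mem_filter, not_and]
      intro _ _
      rw [hu]
      exact not_prec_self π _
  -- sum monotonicity helper
  have hmono : ∀ b1 b2 : A, π x b1 b2 →
      (∑ d ∈ Finset.univ.filter (fun d => π x d b1), occ s (x ++ [d])) +
        occ s (x ++ [b1]) ≤
      ∑ d ∈ Finset.univ.filter (fun d => π x d b2), occ s (x ++ [d]) := by
    intro b1 b2 h12
    have hnm : b1 ∉ Finset.univ.filter (fun d => π x d b1) := by
      simp [irrefl_of (π x) b1]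
    have hsub : insert b1 (Finset.univ.filter (fun d => π x d b1)) ⊆
        Finset.univ.filter (fun d => π x d b2) := by
      intro d hd
      simp only [Finset.mem_insert, Finset.mem_filter, Finset.mem_univ, true_and] at hd ⊢
      rcases hd with rfl | hd
      · exact h12
      · exact trans_of (π x) hd h12
    calc (∑ d ∈ Finset.univ.filter (fun d => π x d b1), occ s (x ++ [d])) +
          occ s (x ++ [b1])
        = ∑ d ∈ insert b1 (Finset.univ.filter (fun d => π x d b1)),
            occ s (x ++ [d]) := by rw [Finset.sum_insert hnm, Nat.add_comm]
      _ ≤ _ := Finset.sum_le_sum_of_subset hsub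
  constructor
  · simp only [Option.some.injEq]
    rintro rfl
    rw [hNeq]
    exact ⟨Nat.le_add_right _ _, Nat.add_lt_add_left hMlt _⟩
  · rintro ⟨h1, h2⟩
    rcases trichotomous_of (π x) a c with hac | rfl | hca
    · exact absurd h1 (by have := hmono a c hac; omega)
    · rfl
    · exact absurd h2 (by have := hmono c a hca; omega)
end

section
/- Local orderings reduce to the standard BWT over the alphabet Σ × Σ: let s be a primitive string of length n over Σ and consider the local ordering of context length 1 determined by linear orders π_ε and (π_c)_{c∈Σ}. Define the string S of length n over Σ × Σ by S[i] = (s[i], s[(i mod n) + 1]) for i = 1, …, n, and define the linear order Π on Σ × Σ by (a₁, a₂) <_Π (b₁, b₂) iff a₁ <_{π_ε} b₁, or a₁ = b₁ and a₂ <_{π_{a₁}} b₂. Then for all 0 ≤ i, j < n with i ≠ j, the rotation R_i of s precedes R_j of s under the local-ordering relation ≺ if and only if the rotation R_i of S lexicographically precedes the rotation R_j of S with respect to Π. -/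
open scoped Classical

variable {A : Type*}

/-- The context adaptive family determined by a local ordering of context
length 1: `π_ε` for the empty context, and `π_c` for any context ending with
the symbol `c`. -/
def locFam (πe : A → A → Prop) (πc : A → A → A → Prop) :
    List A → A → A → Prop :=
  fun x => match x.getLast? with
    | none => πe
    | some c => πc c

/-- The linear order `Π` on `Σ × Σ`:
`(a₁, a₂) <_Π (b₁, b₂)` iff `a₁ <_{π_ε} b₁`, or `a₁ = b₁ ∧ a₂ <_{π_{a₁}} b₂`. -/
def pairOrd (πe : A → A → Prop) (πc : A → A → A → Prop) :
    A × A → A × A → Prop :=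
  fun p q => πe p.1 q.1 ∨ (p.1 = q.1 ∧ πc p.1 p.2 q.2)

section Aux
variable [DecidableEq A]

lemma prefix_getElem? {l₁ l₂ : List A} (h : l₁ <+: l₂) {k : ℕ}
    (hk : k < l₁.length) : l₂[k]? = l₁[k]? := by
  obtain ⟨t, rfl⟩ := h
  rw [List.getElem?_append_left hk]

lemma lcp_prefix_left : ∀ u v : List A, lcp u v <+: u
  | [], _ => by simp [lcp]
  | a :: as, [] => by simp [lcp]
  | a :: as, b :: bs => by
      by_cases h : a = b
      · simpa [lcp, h, List.cons_prefix_cons] using lcp_prefix_left as bs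
      · simp [lcp, h]

lemma lcp_prefix_right : ∀ u v : List A, lcp u v <+: v
  | [], _ => by simp [lcp]
  | a :: as, [] => by simp [lcp]
  | a :: as, b :: bs => by
      by_cases h : a = b
      · subst h
        simpa [lcp, List.cons_prefix_cons] using lcp_prefix_right as bs
      · simp [lcp, h]

lemma lcp_get_ne : ∀ u v : List A, u ≠ v →
    u[(lcp u v).length]? ≠ v[(lcp u v).length]?
  | [], [], h => absurd rfl h
  | [], b :: bs, _ => by simp [lcp]
  | a :: as, [], _ => by simp [lcp]
  | a :: as, b :: bs, h => by
      by_cases hab : a = b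
      · subst hab
        have hne : as ≠ bs := fun hh => h (by rw [hh])
        simpa [lcp] using lcp_get_ne as bs hne
      · simp [lcp, hab]

lemma lcp_length_of : ∀ (u v : List A) (m : ℕ),
    (∀ k < m, u[k]? = v[k]?) → u[m]? ≠ v[m]? → (lcp u v).length = m
  | [], [], m, h, hne => by
      exfalso; exact hne (by simp)
  | [], b :: bs, m, h, hne => by
      cases m with
      | zero => simp [lcp]
      | succ m => exact absurd (h 0 (Nat.succ_pos m)).symm (by simp)
  | a :: as, [], m, h, hne => by
      cases m with
      | zero => simp [lcp]
      | succ m => exact absurd (h 0 (Nat.succ_pos m)) (by simp)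
  | a :: as, b :: bs, m, h, hne => by
      cases m with
      | zero =>
          have hab : a ≠ b := by
            intro hh; exact hne (by simp [hh])
          simp [lcp, hab]
      | succ m =>
          have hab : a = b := by
            have := h 0 (Nat.succ_pos m); simpa using this
          subst hab
          have : (lcp as bs).length = m :=
            lcp_length_of as bs m
              (fun k hk => by simpa using h (k + 1) (Nat.succ_lt_succ hk))
              (by simpa using hne)
          simp [lcp, this]

lemma lex_iff_lcp {B : Type*} [DecidableEq B] (r : B → B → Prop)
    (hirr : ∀ a, ¬ r a a) : ∀ (U V : List B), U.length = V.length →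
    (List.Lex r U V ↔ ∃ a b, U[(lcp U V).length]? = some a ∧
      V[(lcp U V).length]? = some b ∧ r a b)
  | [], [], _ => by
      constructor
      · intro h; cases h
      · rintro ⟨a, b, ha, _, _⟩; simp [lcp] at ha
  | [], b :: bs, h => by simp at h
  | a :: as, [], h => by simp at h
  | a :: as, b :: bs, h => by
      by_cases hab : a = b
      · subst hab
        have hl : as.length = bs.length := by simpa using h
        constructor
        · intro hlex
          cases hlex with
          | rel hr => exact absurd hr (hirr a)
          | cons htail =>
              obtain ⟨x, y, hx, hy, hr⟩ := (lex_iff_lcp r hirr as bs hl).mp htail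
              exact ⟨x, y, by simpa [lcp] using hx, by simpa [lcp] using hy, hr⟩
        · rintro ⟨x, y, hx, hy, hr⟩
          exact List.Lex.cons ((lex_iff_lcp r hirr as bs hl).mpr
            ⟨x, y, by simpa [lcp] using hx, by simpa [lcp] using hy, hr⟩)
      · constructor
        · intro hlex
          cases hlex with
          | rel hr => exact ⟨a, b, by simp [lcp, hab], by simp [lcp, hab], hr⟩
          | cons _ => exact absurd rfl hab
        · rintro ⟨x, y, hx, hy, hr⟩
          simp only [lcp, if_neg hab, List.length_nil] at hx hy
          rw [List.getElem?_cons_zero] at hx hy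
          obtain rfl := Option.some.inj hx
          obtain rfl := Option.some.inj hy
          exact List.Lex.rel hr

/-- cyclic access -/
def cyc (s : List A) (h : 0 < s.length) (k : ℕ) : A :=
  s[k % s.length]'(Nat.mod_lt _ h)

lemma rotate_getElem? (s : List A) (h : 0 < s.length) (i k : ℕ)
    (hk : k < s.length) : (s.rotate i)[k]? = some (cyc s h (i + k)) := by
  rw [List.getElem?_rotate hk, Nat.add_comm k i,
    List.getElem?_eq_getElem (Nat.mod_lt _ h)]
  rfl

lemma zip_rot_getElem? (s : List A) (h : 0 < s.length) (i k : ℕ)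
    (hk : k < s.length) :
    ((s.zip (s.rotate 1)).rotate i)[k]? =
      some (cyc s h (i + k), cyc s h (i + k + 1)) := by
  have hlen : (s.zip (s.rotate 1)).length = s.length := by simp
  have hk' : k < (s.zip (s.rotate 1)).length := by rw [hlen]; exact hk
  rw [List.getElem?_rotate hk', hlen, Nat.add_comm k i,
    List.getElem?_eq_getElem (by simpa using Nat.mod_lt (i + k) h)]
  congr 1
  rw [List.getElem_zip]
  have key : ((i + k) % s.length + 1) % s.length = (i + k + 1) % s.length := by
    conv_lhs => rw [Nat.add_mod]
    rw [Nat.mod_mod_of_dvd _ dvd_rfl, ← Nat.add_mod]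
  have h2 : (s.rotate 1)[(i + k) % s.length]'(by simpa using Nat.mod_lt (i + k) h)
      = cyc s h (i + k + 1) := by
    unfold cyc
    rw [List.getElem_rotate]
    congr 1
  rw [h2]
  rfl

end Aux

/-- local orderings reduce to the standard BWT over `Σ × Σ`.
With `S = s.zip (s.rotate 1)` (so that `S[i] = (s[i], s[(i mod n) + 1])`), for
all `i ≠ j` the rotation `R_i` of `s` precedes `R_j` under the local-ordering
relation `≺` iff the rotation `R_i` of `S` lexicographically precedes the
rotation `R_j` of `S` with respect to `Π`. -/
theorem stmt14 [Fintype A] [DecidableEq A]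
    (πe : A → A → Prop) (hπe : IsStrictTotalOrder A πe)
    (πc : A → A → A → Prop) (hπc : ∀ c, IsStrictTotalOrder A (πc c))
    (s : List A) (hs : 1 ≤ s.length) (hprim : Primitive s) :
    ∀ i j, i < s.length → j < s.length → i ≠ j →
      (Prec (locFam πe πc) (s.rotate i) (s.rotate j) ↔
        List.Lex (pairOrd πe πc)
          ((s.zip (s.rotate 1)).rotate i) ((s.zip (s.rotate 1)).rotate j)) := by
  intro i j hi hj hij
  set n := s.length with hn
  have h0 : 0 < n := hs
  set u := s.rotate i with hu
  set v := s.rotate j with hv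
  set U := (s.zip (s.rotate 1)).rotate i with hU
  set V := (s.zip (s.rotate 1)).rotate j with hV
  have huv : u ≠ v := fun h => hij (hprim i j hi hj h)
  set ℓ := (lcp u v).length with hℓ
  have hune := lcp_get_ne u v huv
  have hℓn : ℓ < n := by
    by_contra hcon
    push_neg at hcon
    apply hune
    have hulen : u.length = n := by simp [hu, hn]
    have hvlen : v.length = n := by simp [hv, hn]
    rw [List.getElem?_eq_none (by omega), List.getElem?_eq_none (by omega)]
  have hug : ∀ k, k < n → u[k]? = some (cyc s h0 (i + k)) :=
    fun k hk => rotate_getElem? s h0 i k hk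
  have hvg : ∀ k, k < n → v[k]? = some (cyc s h0 (j + k)) :=
    fun k hk => rotate_getElem? s h0 j k hk
  have hUg : ∀ k, k < n → U[k]? = some (cyc s h0 (i + k), cyc s h0 (i + k + 1)) :=
    fun k hk => zip_rot_getElem? s h0 i k hk
  have hVg : ∀ k, k < n → V[k]? = some (cyc s h0 (j + k), cyc s h0 (j + k + 1)) :=
    fun k hk => zip_rot_getElem? s h0 j k hk
  have heq : ∀ k, k < ℓ → cyc s h0 (i + k) = cyc s h0 (j + k) := by
    intro k hk
    have h1 : u[k]? = (lcp u v)[k]? := prefix_getElem? (lcp_prefix_left u v) hk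
    have h2 : v[k]? = (lcp u v)[k]? := prefix_getElem? (lcp_prefix_right u v) hk
    have h3 := h1.trans h2.symm
    rw [hug k (lt_trans hk hℓn), hvg k (lt_trans hk hℓn)] at h3
    exact Option.some.inj h3
  have hneq : cyc s h0 (i + ℓ) ≠ cyc s h0 (j + ℓ) := by
    intro h
    apply hune
    rw [hug ℓ hℓn, hvg ℓ hℓn, h]
  have hWlen : U.length = V.length := by simp [hU, hV]
  have hirr : ∀ p : A × A, ¬ pairOrd πe πc p p := by
    intro p hp
    rcases hp with h | ⟨_, h⟩
    · exact hπe.irrefl p.1 h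
    · exact (hπc p.1).irrefl p.2 h
  rw [lex_iff_lcp (pairOrd πe πc) hirr U V hWlen]
  -- Prec unfolding
  have hPrec : Prec (locFam πe πc) u v ↔
      locFam πe πc (lcp u v) (cyc s h0 (i + ℓ)) (cyc s h0 (j + ℓ)) := by
    constructor
    · rintro ⟨a, b, ha, hb, hr⟩
      rw [hug ℓ hℓn] at ha
      rw [hvg ℓ hℓn] at hb
      obtain rfl := Option.some.inj ha
      obtain rfl := Option.some.inj hb
      exact hr
    · intro hr
      exact ⟨_, _, hug ℓ hℓn, hvg ℓ hℓn, hr⟩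
  rw [hPrec]
  rcases Nat.eq_zero_or_eq_succ_pred ℓ with hc | hc
  · -- ℓ = 0
    have hlcpnil : lcp u v = [] := List.length_eq_zero_iff.mp (hℓ ▸ hc)
    have hL : (lcp U V).length = 0 := by
      apply lcp_length_of _ _ 0 (by intro k hk; omega)
      rw [hUg 0 h0, hVg 0 h0]
      intro hcon
      exact hneq (by rw [hc]; exact congrArg Prod.fst (Option.some.inj hcon))
    rw [hL]
    have hloc : locFam πe πc (lcp u v) = πe := by
      rw [hlcpnil]; rfl
    rw [hloc]
    constructor
    · intro hr
      refine ⟨_, _, hUg 0 h0, hVg 0 h0, Or.inl ?_⟩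
      show πe (cyc s h0 (i + 0)) (cyc s h0 (j + 0))
      rw [Nat.add_zero, Nat.add_zero, ← Nat.add_zero i, ← Nat.add_zero j, ← hc]
      · exact hr
    · rintro ⟨p, q, hp, hq, hr⟩
      rw [hUg 0 h0] at hp
      rw [hVg 0 h0] at hq
      obtain rfl := Option.some.inj hp
      obtain rfl := Option.some.inj hq
      rcases hr with hr | ⟨he, _⟩
      · show πe (cyc s h0 (i + ℓ)) (cyc s h0 (j + ℓ))
        rw [hc]; exact hr
      · exact absurd (by rw [hc]; exact he) hneq
  · -- ℓ = m + 1
    set m := ℓ - 1 with hm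
    have hmℓ : m < ℓ := by omega
    have hmn : m < n := lt_trans hmℓ hℓn
    have hlast : (lcp u v).getLast? = some (cyc s h0 (i + m)) := by
      rw [List.getLast?_eq_getElem?, ← hℓ]
      have : (lcp u v)[ℓ - 1]? = u[m]? :=
        (prefix_getElem? (lcp_prefix_left u v) (by omega)).symm
      rw [this, hug m hmn]
    have hloc : locFam πe πc (lcp u v) = πc (cyc s h0 (i + m)) := by
      simp only [locFam, hlast]
    rw [hloc]
    have hL : (lcp U V).length = m := by
      apply lcp_length_of _ _ m
      · intro k hk
        rw [hUg k (by omega), hVg k (by omega), heq k (by omega)]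
        have := heq (k + 1) (by omega)
        rw [← Nat.add_assoc, ← Nat.add_assoc] at this
        rw [this]
      · rw [hUg m hmn, hVg m hmn]
        intro hcon
        apply hneq
        have h2 := congrArg Prod.snd (Option.some.inj hcon)
        simp only at h2
        have hi1 : i + m + 1 = i + ℓ := by omega
        have hj1 : j + m + 1 = j + ℓ := by omega
        rw [hi1, hj1] at h2
        exact h2
    rw [hL]
    have hcm : cyc s h0 (j + m) = cyc s h0 (i + m) := (heq m hmℓ).symm
    have hi1 : i + m + 1 = i + ℓ := by omega
    have hj1 : j + m + 1 = j + ℓ := by omega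
    constructor
    · intro hr
      refine ⟨_, _, hUg m hmn, hVg m hmn, Or.inr ⟨?_, ?_⟩⟩
      · exact (heq m hmℓ)
      · show πc (cyc s h0 (i + m)) (cyc s h0 (i + m + 1)) (cyc s h0 (j + m + 1))
        rw [hi1, hj1]
        exact hr
    · rintro ⟨p, q, hp, hq, hr⟩
      rw [hUg m hmn] at hp
      rw [hVg m hmn] at hq
      obtain rfl := Option.some.inj hp
      obtain rfl := Option.some.inj hq
      rcases hr with hr | ⟨_, hr⟩
      · exact absurd (heq m hmℓ ▸ hr) (hπe.irrefl _)
      · rw [← hi1, ← hj1]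
        exact hr
end

section
/- Invertibility of ± orderings: let π be a linear order on Σ and π^R its reversal, fix a context adaptive ordering in which π_x ∈ {π, π^R} for every string x (a ± ordering), and fix n ≥ 1. If s and t are primitive strings of length n over Σ such that BWT_*(s) = BWT_*(t) and #{u : u is a rotation of s with u ≺ s} = #{u : u is a rotation of t with u ≺ t}, then s = t. -/
open scoped Classical

variable {A : Type*}

/-- `rank π s i` is the row index of the rotation `s.rotate i` in the sorted
rotation matrix `M_*(s)`, i.e. the number of rotations that `≺`-precede it. -/
noncomputable def rank [DecidableEq A] (π : List A → A → A → Prop)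
    (s : List A) (i : ℕ) : ℕ :=
  ((Finset.range s.length).filter
    (fun j => Prec π (s.rotate j) (s.rotate i))).card

/-- `bwtStar π s` is the string `L = BWT_*(s)`: the rotation indices sorted by
their rank (i.e. by `≺`), each mapped to the last symbol of its rotation. -/
noncomputable def bwtStar [DecidableEq A] (π : List A → A → A → Prop)
    (s : List A) : List A :=
  ((List.range s.length).mergeSort
      (fun i j => rank π s i ≤ rank π s j)).filterMap
    (fun i => (s.rotate i).getLast?)

/-! Every `P x` is a strict total order, so `≺` is a strict total order on the rotations of `s`,
and it is compatible with truncation: if `u ≺ v` then the length-`k` prefixes of `u` and `v`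
are equal or again `≺`-ordered. Hence the length-`k` prefixes of the rows of `M_*(s)`, read top
to bottom, form a sorted list, which is determined by its multiset. The rotations of `s` are
closed under moving the last symbol to the front, so the multiset of `(k+1)`-prefixes is the
multiset of the strings `L[i] · (k-prefix of row i)`, which is computed from `L` and the sorted
`k`-prefixes. By induction on `k`, `L` determines `M_*(s)`. Finally `s` is the row of `M_*(s)`
whose index is the number of rotations preceding it. -/

open scoped List

theorem List.isPrefix_or_isPrefix_or_exists_diverge (u v : List A) :
    u <+: v ∨ v <+: u ∨ ∃ x a b r r', a ≠ b ∧ u = x ++ a :: r ∧ v = x ++ b :: r' := by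
  induction u generalizing v with
  | nil => exact .inl List.nil_prefix
  | cons a u ih =>
    cases v with
    | nil => exact .inr (.inl List.nil_prefix)
    | cons b v =>
      by_cases hab : a = b
      · subst hab
        rcases ih v with h | h | ⟨x, c, d, r, r', hcd, rfl, rfl⟩
        · exact .inl (List.cons_prefix_cons.mpr ⟨rfl, h⟩)
        · exact .inr (.inl (List.cons_prefix_cons.mpr ⟨rfl, h⟩))
        · exact .inr (.inr ⟨a :: x, c, d, r, r', hcd, rfl, rfl⟩)
      · exact .inr (.inr ⟨[], a, b, u, v, hab, rfl, rfl⟩)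

theorem List.append_cons_eq_append_cons_cases {x y r q : List A} {b c : A}
    (h : x ++ b :: r = y ++ c :: q) :
    (∃ z, y = x ++ b :: z) ∨ (x = y ∧ b = c) ∨ ∃ z, x = y ++ c :: z := by
  rcases List.append_eq_append_iff.mp h with ⟨_ | ⟨e, z⟩, rfl, h'⟩ | ⟨_ | ⟨e, z⟩, rfl, h'⟩ <;>
    simp_all

theorem List.map_rotate_one_rotations_perm (s : List A) :
    ((List.range s.length).map s.rotate).map (·.rotate 1) ~ (List.range s.length).map s.rotate := by
  rcases h : s.length with _ | m
  · simp
  · simp only [List.map_map, Function.comp_def, List.rotate_rotate]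
    conv_lhs => rw [List.range_succ]
    conv_rhs => rw [List.range_succ_eq_map]
    simp only [List.map_append, List.map_cons, List.map_map,
      List.rotate_zero, Function.comp_def, Nat.succ_eq_add_one]
    rw [← h, List.rotate_length]
    exact List.perm_append_singleton _ _

theorem List.take_succ_eq_getLast?_rotate_one_append {u : List A} {k : ℕ} (hk : k < u.length) :
    u.take (k + 1) = (u.rotate 1).getLast?.toList ++ (u.rotate 1).take k := by
  cases u with
  | nil => simp at hk
  | cons a u =>
    rw [List.rotate_cons_succ, List.rotate_zero, List.getLast?_concat,
      List.take_append_of_le_length (by simpa [Nat.lt_succ_iff] using hk)]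
    simp

theorem List.Pairwise.countP_getElem {α : Type*} {r : α → α → Prop} [Std.Asymm r]
    {M : List α} (hM : M.Pairwise r) (i : ℕ) (hi : i < M.length) :
    M.countP (r · M[i]) = i := by
  induction M generalizing i with
  | nil => simp at hi
  | cons a M ih =>
    rw [List.pairwise_cons] at hM
    cases i with
    | zero =>
      have hirr : ¬ r a a := fun h => asymm h h
      rw [List.getElem_cons_zero, List.countP_cons,
        List.countP_eq_zero.mpr fun b hb => by simpa using asymm (hM.1 b hb)]
      simp [hirr]
    | succ i =>
      simp [ih hM.2 i (by simpa using hi), hM.1 _ (List.getElem_mem _)]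

theorem List.Pairwise.eq_of_countP_eq {α : Type*} {r : α → α → Prop} [Std.Asymm r]
    {M : List α} (hM : M.Pairwise r) {u w : α} (hu : u ∈ M) (hw : w ∈ M)
    (h : M.countP (r · u) = M.countP (r · w)) : u = w := by
  obtain ⟨i, hi, rfl⟩ := List.mem_iff_getElem.mp hu
  obtain ⟨j, hj, rfl⟩ := List.mem_iff_getElem.mp hw
  rw [hM.countP_getElem, hM.countP_getElem] at h
  subst h
  rfl

section Prec

variable [DecidableEq A] {P : List A → A → A → Prop} {u v w : List A}

theorem lcp_comm (u v : List A) : lcp u v = lcp v u := by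
  induction u generalizing v with
  | nil => cases v <;> rfl
  | cons a u ih =>
    cases v with
    | nil => rfl
    | cons b v =>
      by_cases hab : a = b
      · simp [lcp, hab, ih]
      · simp [lcp, hab, Ne.symm hab]

theorem lcp_eq_left_of_prefix (h : u <+: v) : lcp u v = u := by
  induction u generalizing v with
  | nil => cases v <;> rfl
  | cons a u ih =>
    cases v with
    | nil => simp at h
    | cons b v =>
      obtain ⟨rfl, h'⟩ := List.cons_prefix_cons.mp h
      simp [lcp, ih h']

theorem lcp_append_cons (x : List A) {a b : A} (hab : a ≠ b) (r r' : List A) :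
    lcp (x ++ a :: r) (x ++ b :: r') = x := by
  induction x with
  | nil => simp [lcp, hab]
  | cons c x ih => simp [lcp, ih]

theorem prec_iff :
    Prec P u v ↔ ∃ x a b r r', a ≠ b ∧ P x a b ∧ u = x ++ a :: r ∧ v = x ++ b :: r' := by
  constructor
  · rintro ⟨a, b, ha, hb, hab⟩
    rcases List.isPrefix_or_isPrefix_or_exists_diverge u v with
      h | h | ⟨x, c, d, r, r', hcd, rfl, rfl⟩
    · simp [lcp_eq_left_of_prefix h] at ha
    · rw [lcp_comm, lcp_eq_left_of_prefix h] at hb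
      simp at hb
    · simp only [lcp_append_cons x hcd, List.getElem?_append_right le_rfl, Nat.sub_self,
        List.getElem?_cons_zero, Option.some_inj] at ha hb hab
      subst ha hb
      exact ⟨x, c, d, r, r', hcd, hab, rfl, rfl⟩
  · rintro ⟨x, a, b, r, r', hab, h, rfl, rfl⟩
    exact ⟨a, b, by simp [lcp_append_cons x hab], by simp [lcp_append_cons x hab],
      by rwa [lcp_append_cons x hab]⟩

theorem Prec.irrefl : ¬ Prec P u u := by
  intro h
  obtain ⟨x, a, b, r, r', hab, -, rfl, h⟩ := prec_iff.mp h
  simp_all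

theorem Prec.asymm [∀ x, Std.Asymm (P x)] (h : Prec P u v) : ¬ Prec P v u := by
  obtain ⟨x, a, b, r, r', hab, hP, rfl, rfl⟩ := prec_iff.mp h
  rintro ⟨c, d, hc, hd, hcd⟩
  simp [lcp_append_cons x hab.symm] at hc hd hcd
  subst hc hd
  exact asymm hP hcd

instance [∀ x, Std.Asymm (P x)] : Std.Asymm (Prec P) := ⟨fun _ _ h => h.asymm⟩

theorem Prec.trans [∀ x, IsStrictOrder A (P x)] (h₁ : Prec P u v) (h₂ : Prec P v w) :
    Prec P u w := by
  obtain ⟨x, a, b, r, r', hab, habP, rfl, hv⟩ := prec_iff.mp h₁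
  obtain ⟨y, c, d, q, q', hcd, hcdP, hv', rfl⟩ := prec_iff.mp h₂
  rw [prec_iff]
  rcases List.append_cons_eq_append_cons_cases (hv.symm.trans hv') with
    ⟨z, rfl⟩ | ⟨rfl, rfl⟩ | ⟨z, rfl⟩
  · exact ⟨x, a, b, r, z ++ d :: q', hab, habP, rfl, by simp⟩
  · have hadP := _root_.trans habP hcdP
    exact ⟨x, a, d, r, q', ne_of_irrefl hadP, hadP, rfl, rfl⟩
  · exact ⟨y, c, d, z ++ a :: r, q', hcd, hcdP, by simp, rfl⟩

theorem Prec.take (h : Prec P u v) (m : ℕ) :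
    u.take m = v.take m ∨ Prec P (u.take m) (v.take m) := by
  obtain ⟨x, a, b, r, r', hab, hP, rfl, rfl⟩ := prec_iff.mp h
  rcases le_or_gt m x.length with hm | hm
  · simp [List.take_append_of_le_length hm]
  · obtain ⟨k, rfl⟩ : ∃ k, m = x.length + (k + 1) := ⟨m - x.length - 1, by omega⟩
    refine .inr (prec_iff.mpr ⟨x, a, b, r.take k, r'.take k, hab, hP, ?_, ?_⟩) <;>
      simp [List.take_append]

theorem prec_or_prec_of_length_eq [∀ x, Std.Trichotomous (P x)] (hlen : u.length = v.length)
    (hne : u ≠ v) : Prec P u v ∨ Prec P v u := by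
  rcases List.isPrefix_or_isPrefix_or_exists_diverge u v with
    h | h | ⟨x, a, b, r, r', hab, rfl, rfl⟩
  · exact absurd (h.eq_of_length hlen) hne
  · exact absurd (h.eq_of_length hlen.symm).symm hne
  · rcases trichotomous_of (P x) a b with h | h | h
    · exact .inl (prec_iff.mpr ⟨x, a, b, r, r', hab, h, rfl, rfl⟩)
    · exact absurd h hab
    · exact .inr (prec_iff.mpr ⟨x, b, a, r', r, hab.symm, h, rfl, rfl⟩)

end Prec

section SortedRotations

variable [DecidableEq A] (P : List A → A → A → Prop) (s : List A)

/-- The rotation matrix `M_*(s)`, as the list of its rows. -/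
noncomputable def sortedRotations : List (List A) :=
  ((List.range s.length).mergeSort (fun i j => rank P s i ≤ rank P s j)).map s.rotate

theorem sortedRotations_perm : sortedRotations P s ~ (List.range s.length).map s.rotate :=
  (List.mergeSort_perm _ _).map _

theorem bwtStar_eq_filterMap_sortedRotations :
    bwtStar P s = (sortedRotations P s).filterMap List.getLast? := by
  rw [bwtStar, sortedRotations, List.filterMap_map]
  rfl

theorem length_of_mem_sortedRotations {u : List A} (hu : u ∈ sortedRotations P s) :
    u.length = s.length := by
  obtain ⟨i, -, rfl⟩ := List.mem_map.mp ((sortedRotations_perm P s).mem_iff.mp hu)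
  exact List.length_rotate s i

theorem self_mem_sortedRotations (hs : s ≠ []) : s ∈ sortedRotations P s :=
  (sortedRotations_perm P s).mem_iff.mpr
    (List.mem_map.mpr ⟨0, List.mem_range.mpr (List.length_pos_iff.mpr hs), List.rotate_zero s⟩)

theorem map_rotate_one_sortedRotations_perm :
    (sortedRotations P s).map (·.rotate 1) ~ sortedRotations P s :=
  ((sortedRotations_perm P s).map _).trans
    ((List.map_rotate_one_rotations_perm s).trans (sortedRotations_perm P s).symm)

theorem countP_prec_sortedRotations (v : List A) :
    (sortedRotations P s).countP (Prec P · v) =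
      ((Finset.range s.length).filter fun i => Prec P (s.rotate i) v).card := by
  rw [(sortedRotations_perm P s).countP_eq, List.countP_map, List.countP_eq_length_filter]
  rfl

theorem map_getLast?_sortedRotations (hs : s ≠ []) :
    (sortedRotations P s).map List.getLast? = (bwtStar P s).map some := by
  rw [bwtStar_eq_filterMap_sortedRotations, List.map_filterMap, ← List.filterMap_eq_map']
  refine List.filterMap_congr fun u hu => ?_
  have hu : u ≠ [] := List.ne_nil_of_length_pos
    ((length_of_mem_sortedRotations P s hu).symm ▸ List.length_pos_iff.mpr hs)
  simp [List.getLast?_eq_getLast_of_ne_nil hu]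

variable {P s}

theorem rank_lt_rank_of_prec [∀ x, IsStrictOrder A (P x)] {i j : ℕ} (hi : i < s.length)
    (h : Prec P (s.rotate i) (s.rotate j)) : rank P s i < rank P s j := by
  refine Finset.card_lt_card ⟨fun k hk => ?_, fun hsub => ?_⟩
  · rw [Finset.mem_filter] at hk ⊢
    exact ⟨hk.1, hk.2.trans h⟩
  · exact Prec.irrefl (Finset.mem_filter.mp (hsub (Finset.mem_filter.mpr
      ⟨Finset.mem_range.mpr hi, h⟩))).2

theorem pairwise_prec_sortedRotations [∀ x, IsStrictTotalOrder A (P x)] (hs : Primitive s) :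
    (sortedRotations P s).Pairwise (Prec P) := by
  set l := (List.range s.length).mergeSort (fun i j => rank P s i ≤ rank P s j)
  have hperm : l ~ List.range s.length := List.mergeSort_perm _ _
  have hsorted : l.Pairwise (fun i j => rank P s i ≤ rank P s j) := by
    simpa using List.pairwise_mergeSort (le := fun i j => decide (rank P s i ≤ rank P s j))
      (fun a b c h₁ h₂ => by simp only [decide_eq_true_eq] at *; omega)
      (fun a b => by simpa using Nat.le_total (rank P s a) (rank P s b)) (List.range s.length)
  rw [sortedRotations, List.pairwise_map]
  refine (hsorted.and (hperm.nodup_iff.mpr List.nodup_range)).imp_of_mem ?_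
  rintro i j hi hj ⟨hle, hne⟩
  have hi : i < s.length := List.mem_range.mp (hperm.mem_iff.mp hi)
  have hj : j < s.length := List.mem_range.mp (hperm.mem_iff.mp hj)
  refine (prec_or_prec_of_length_eq (by simp) fun he => hne (hs i j hi hj he)).resolve_right
    fun h => ?_
  exact absurd hle (not_le.mpr (rank_lt_rank_of_prec hj h))

end SortedRotations

theorem map_take_succ_perm {M : List (List A)} (hrot : M.map (·.rotate 1) ~ M) {k : ℕ}
    (hk : ∀ u ∈ M, k < u.length) :
    M.map (·.take (k + 1)) ~ M.map fun u => u.getLast?.toList ++ u.take k := by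
  rw [List.map_congr_left fun u hu => List.take_succ_eq_getLast?_rotate_one_append (hk u hu)]
  convert hrot.map (fun u => u.getLast?.toList ++ u.take k) using 1
  rw [List.map_map]
  rfl

theorem eq_of_map_getLast?_eq [DecidableEq A] {P : List A → A → A → Prop} [∀ x, Std.Asymm (P x)]
    {M N : List (List A)} {n : ℕ}
    (hM : M.Pairwise (Prec P)) (hN : N.Pairwise (Prec P))
    (hMlen : ∀ u ∈ M, u.length = n) (hNlen : ∀ u ∈ N, u.length = n)
    (hMrot : M.map (·.rotate 1) ~ M) (hNrot : N.map (·.rotate 1) ~ N)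
    (hlast : M.map List.getLast? = N.map List.getLast?) : M = N := by
  have hsorted : ∀ {L : List (List A)}, L.Pairwise (Prec P) → ∀ m,
      (L.map (·.take m)).Pairwise fun u v => u = v ∨ Prec P u v :=
    fun hL m => List.pairwise_map.mpr (hL.imp (·.take m))
  have hprefixes : ∀ k ≤ n, M.map (·.take k) = N.map (·.take k) := by
    intro k hk
    induction k with
    | zero => simpa using congrArg List.length hlast
    | succ k ih =>
      have hpairs : M.map (fun u => u.getLast?.toList ++ u.take k) =
          N.map (fun u => u.getLast?.toList ++ u.take k) := by
        have := congrArg (List.map fun p => p.1.toList ++ p.2)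
          (congrArg₂ List.zip hlast (ih (by omega)))
        simpa only [List.zip_map', List.map_map, Function.comp_def] using this
      refine List.Perm.eq_of_pairwise (fun u v _ _ huv hvu => ?_) (hsorted hM _) (hsorted hN _)
        ((map_take_succ_perm hMrot fun u hu => by rw [hMlen u hu]; omega).trans
          (hpairs ▸ (map_take_succ_perm hNrot fun u hu => by rw [hNlen u hu]; omega).symm))
      rcases huv with rfl | huv
      · rfl
      rcases hvu with rfl | hvu
      · rfl
      exact absurd hvu (asymm huv)
  have htake_self : ∀ {L : List (List A)}, (∀ u ∈ L, u.length = n) → L.map (·.take n) = L :=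
    fun hL => (List.map_congr_left fun u hu => List.take_of_length_le (hL u hu).le).trans
      (List.map_id' _)
  rw [← htake_self hMlen, ← htake_self hNlen, hprefixes n le_rfl]

theorem stmt16_general [DecidableEq A]
    (π : A → A → Prop) (hπ : IsStrictTotalOrder A π)
    (P : List A → A → A → Prop)
    (hpm : ∀ x : List A, P x = π ∨ P x = fun a b => π b a)
    (n : ℕ)
    (s t : List A) (hslen : s.length = n) (htlen : t.length = n)
    (hsprim : Primitive s) (htprim : Primitive t)
    (hbwt : bwtStar P s = bwtStar P t)
    (hrow : ((Finset.range s.length).filter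
              (fun i => Prec P (s.rotate i) s)).card =
            ((Finset.range t.length).filter
              (fun i => Prec P (t.rotate i) t)).card) :
    s = t := by
  obtain rfl | hn := n.eq_zero_or_pos
  · rw [List.length_eq_zero_iff.mp hslen, List.length_eq_zero_iff.mp htlen]
  have hs : s ≠ [] := List.ne_nil_of_length_pos (hslen ▸ hn)
  have ht : t ≠ [] := List.ne_nil_of_length_pos (htlen ▸ hn)
  have : ∀ x, IsStrictTotalOrder A (P x) := fun x => by
    rcases hpm x with h | h <;> rw [h]
    exacts [hπ, inferInstanceAs (IsStrictTotalOrder A (Function.swap π))]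
  have hM : sortedRotations P s = sortedRotations P t :=
    eq_of_map_getLast?_eq (pairwise_prec_sortedRotations hsprim)
      (pairwise_prec_sortedRotations htprim)
      (fun u hu => (length_of_mem_sortedRotations P s hu).trans hslen)
      (fun u hu => (length_of_mem_sortedRotations P t hu).trans htlen)
      (map_rotate_one_sortedRotations_perm P s) (map_rotate_one_sortedRotations_perm P t)
      (by rw [map_getLast?_sortedRotations P s hs, map_getLast?_sortedRotations P t ht, hbwt])
  refine (pairwise_prec_sortedRotations hsprim).eq_of_countP_eq
    (self_mem_sortedRotations P s hs) (hM ▸ self_mem_sortedRotations P t ht) ?_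
  rwa [countP_prec_sortedRotations, hM, countP_prec_sortedRotations]

/-- invertibility of ± orderings.  Fix a linear order `π` on `Σ`
and a context adaptive ordering `P` with `P x ∈ {π, π^R}` for every string `x`.
If two primitive strings of the same length `n ≥ 1` have the same transform
`BWT_*` and occupy the same row index in their respective sorted rotation
matrices, then they are equal. -/
theorem stmt16 [Fintype A] [DecidableEq A]
    (π : A → A → Prop) (hπ : IsStrictTotalOrder A π)
    (P : List A → A → A → Prop)
    (hpm : ∀ x : List A, P x = π ∨ P x = fun a b => π b a)
    (n : ℕ) (hn : 1 ≤ n)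
    (s t : List A) (hslen : s.length = n) (htlen : t.length = n)
    (hsprim : Primitive s) (htprim : Primitive t)
    (hbwt : bwtStar P s = bwtStar P t)
    (hrow : ((Finset.range s.length).filter
              (fun i => Prec P (s.rotate i) s)).card =
            ((Finset.range t.length).filter
              (fun i => Prec P (t.rotate i) t)).card) :
    s = t :=
  stmt16_general π hπ P hpm n s t hslen htlen hsprim htprim hbwt hrow
end
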